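/- arXiv:2509.10180 — 2 statements merged into one kernel-verified Lean document; each statement's English description precedes it below -/
import Mathlib

section
/- Let G : ℝ^M → ℝ be C¹ and suppose it satisfies the Łojasiewicz inequality at U* ∈ ℝ^M, i.e. there exist ν ∈ (0,1/2], γ₁ > 0, σ > 0 such that ‖V − U*‖ < σ implies |G(V) − G(U*)|^{1−ν} ≤ γ₁‖∇G(V)‖. Let (Uⁿ) be a bounded sequence in ℝ^M such that (H1) there is c₂ > 0 with G(Uⁿ) − G(U^{n+1}) ≥ c₂‖U^{n+1} − Uⁿ‖² for all n, and (H2) there is c₃ > 0 with ‖∇G(U^{n+1})‖ ≤ c₃‖U^{n+1} − Uⁿ‖ for all n. If some subsequence of (Uⁿ) converges to U*, then the whole sequence (Uⁿ) converges in ℝ^M. -/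
open Filter Topology

private lemma amgm_aux {x y z : ℝ} (hx : 0 ≤ x) (hy : 0 ≤ y) (hz : 0 ≤ z)
    (h : x ^ 2 ≤ y * z) : x ≤ y / 2 + z / 2 := by
  nlinarith [sq_nonneg (y - z), sq_nonneg (x - (y + z) / 2)]

private lemma concave_aux {ν a b : ℝ} (hν0 : 0 < ν) (hν1 : ν ≤ 1) (hb : 0 < b)
    (hba : b ≤ a) : ν * a ^ (ν - 1) * (a - b) ≤ a ^ ν - b ^ ν := by
  have ha : 0 < a := lt_of_lt_of_le hb hba
  have hgm := Real.geom_mean_le_arith_mean2_weighted (w₁ := ν) (w₂ := 1 - ν)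
    (p₁ := b / a) (p₂ := 1) hν0.le (by linarith) (div_pos hb ha).le zero_le_one (by ring)
  rw [Real.one_rpow, mul_one, mul_one] at hgm
  have hdiv : (b / a) ^ ν = b ^ ν / a ^ ν := Real.div_rpow hb.le ha.le ν
  have haν : (0:ℝ) < a ^ ν := Real.rpow_pos_of_pos ha ν
  have h1 : a ^ (ν - 1) * a = a ^ ν := by
    rw [← Real.rpow_add_one ha.ne' (ν - 1)]
    ring_nf
  rw [hdiv] at hgm
  have h2 : b ^ ν ≤ (ν * (b / a) + (1 - ν)) * a ^ ν := (div_le_iff₀ haν).mp hgm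
  have h3 : (b / a) * a = b := div_mul_cancel₀ b ha.ne'
  have h4 : (b / a) * a ^ ν = b * a ^ (ν - 1) := by
    field_simp [← h1]
    rw [← h1]; ring
  nlinarith [h2, h1, h4]
set_option maxHeartbeats 2000000 in
theorem stmt0 {M : ℕ} (G : EuclideanSpace ℝ (Fin M) → ℝ) (hG : ContDiff ℝ 1 G)
    (Ustar : EuclideanSpace ℝ (Fin M))
    (hLoj : ∃ ν : ℝ, ν ∈ Set.Ioc (0:ℝ) (1/2) ∧ ∃ γ₁ > (0:ℝ), ∃ σ > (0:ℝ),
      ∀ V : EuclideanSpace ℝ (Fin M), ‖V - Ustar‖ < σ →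
        |G V - G Ustar| ^ (1 - ν) ≤ γ₁ * ‖gradient G V‖)
    (U : ℕ → EuclideanSpace ℝ (Fin M))
    (hbdd : ∃ R : ℝ, ∀ n, ‖U n‖ ≤ R)
    (hH1 : ∃ c₂ > (0:ℝ), ∀ n, c₂ * ‖U (n+1) - U n‖ ^ 2 ≤ G (U n) - G (U (n+1)))
    (hH2 : ∃ c₃ > (0:ℝ), ∀ n, ‖gradient G (U (n+1))‖ ≤ c₃ * ‖U (n+1) - U n‖)
    (hsub : ∃ φ : ℕ → ℕ, StrictMono φ ∧ Tendsto (U ∘ φ) atTop (𝓝 Ustar)) :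
    ∃ L, Tendsto U atTop (𝓝 L) := by
  clear hbdd
  obtain ⟨ν, ⟨hν0, hν2⟩, γ₁, hγ₁, σ, hσ, hLoj⟩ := hLoj
  obtain ⟨c₂, hc₂, hH1⟩ := hH1
  obtain ⟨c₃, hc₃, hH2⟩ := hH2
  obtain ⟨φ, hφ, hconv⟩ := hsub
  set d : ℕ → ℝ := fun n => ‖U (n+1) - U n‖ with hddef
  have hdnn : ∀ n, 0 ≤ d n := by intro n; simp only [hddef]; positivity
  -- G values are antitone along the sequence
  have hganti : Antitone (fun n => G (U n)) := by
    refine antitone_nat_of_succ_le fun n => ?_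
    have h1 := hH1 n
    nlinarith [sq_nonneg ‖U (n+1) - U n‖]
  have hgφ : Tendsto (fun k => G (U (φ k))) atTop (𝓝 (G Ustar)) :=
    (hG.continuous.tendsto Ustar).comp hconv
  have hglb : ∀ n, G Ustar ≤ G (U n) := by
    intro n
    refine le_of_tendsto hgφ ?_
    filter_upwards [eventually_ge_atTop n] with k hk
    exact hganti (hk.trans hφ.le_apply)
  by_cases hzero : ∃ n, G (U n) = G Ustar
  · -- degenerate case : the sequence is eventually constant
    obtain ⟨n₀, hn₀⟩ := hzero
    refine ⟨U n₀, tendsto_atTop_of_eventually_const (i₀ := n₀) ?_⟩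
    intro m hm
    induction m, hm using Nat.le_induction with
    | base => rfl
    | succ m hm ih =>
      have hgm : G (U m) = G Ustar := le_antisymm (hn₀ ▸ hganti hm) (hglb m)
      have hd0 : ‖U (m+1) - U m‖ ^ 2 ≤ 0 := by
        have h1 := hH1 m
        have h2 := hglb (m+1)
        nlinarith
      have : U (m+1) - U m = 0 := by
        have := sq_nonneg ‖U (m+1) - U m‖
        have hn : ‖U (m+1) - U m‖ = 0 := by nlinarith
        simpa using hn
      rw [sub_eq_zero] at this
      rw [this, ih]
  · -- main case
    push_neg at hzero
    set a : ℕ → ℝ := fun n => G (U n) - G Ustar with hadef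
    have hapos : ∀ n, 0 < a n := by
      intro n; simp only [hadef]
      exact sub_pos.mpr (lt_of_le_of_ne (hglb n) (Ne.symm (hzero n)))
    set H : ℕ → ℝ := fun n => a n ^ ν with hHdef
    have hHpos : ∀ n, 0 < H n := fun n => Real.rpow_pos_of_pos (hapos n) ν
    have haanti : Antitone a := by
      intro m n h; simp only [hadef]
      have := hganti h; linarith
    have hHanti : Antitone H := by
      intro m n h; simp only [hHdef]
      exact Real.rpow_le_rpow (hapos n).le (haanti h) hν0.le
    set K : ℝ := γ₁ * c₃ / (ν * c₂) with hKdef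
    have hK : 0 < K := div_pos (mul_pos hγ₁ hc₃) (mul_pos hν0 hc₂)
    have hH1d : ∀ n, c₂ * d n ^ 2 ≤ a n - a (n+1) := by
      intro n
      have := hH1 n
      simp only [hddef, hadef]
      linarith
    have hLojd : ∀ n, ‖U n - Ustar‖ < σ → a n ^ (1 - ν) ≤ γ₁ * ‖gradient G (U n)‖ := by
      intro n h
      have h2 := hLoj (U n) h
      have e : G (U n) - G Ustar = a n := by simp [hadef]
      rw [e, abs_of_pos (hapos n)] at h2
      exact h2
    -- the key one-step estimate
    have step : ∀ n, ‖U (n+1) - Ustar‖ < σ →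
        d (n+1) ≤ d n / 2 + K * (H (n+1) - H (n+2)) / 2 := by
      intro n hball
      have hL2 : a (n+1) ^ (1 - ν) ≤ γ₁ * (c₃ * d n) := by
        refine (hLojd (n+1) hball).trans ?_
        have := hH2 n
        have : ‖gradient G (U (n+1))‖ ≤ c₃ * d n := by simp only [hddef]; exact this
        nlinarith
      have hrp : 0 < a (n+1) ^ (1 - ν) := Real.rpow_pos_of_pos (hapos _) _
      have hcon := concave_aux (a := a (n+1)) (b := a (n+2)) hν0 (by linarith)
        (hapos (n+2)) (haanti (Nat.le_succ (n+1)))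
      have hΔH : ν * a (n+1) ^ (ν - 1) * (a (n+1) - a (n+2)) ≤ H (n+1) - H (n+2) := by
        simp only [hHdef]; exact hcon
      have hpow : 0 < a (n+1) ^ (ν - 1) := Real.rpow_pos_of_pos (hapos _) _
      have hQP : a (n+1) ^ (ν - 1) * a (n+1) ^ (1 - ν) = 1 := by
        rw [← Real.rpow_add (hapos _)]; norm_num
      have hΔHnn : 0 ≤ H (n+1) - H (n+2) := sub_nonneg.mpr (hHanti (Nat.le_succ (n+1)))
      have h5 : ν * a (n+1) ^ (ν - 1) * (c₂ * d (n+1) ^ 2) ≤ H (n+1) - H (n+2) := by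
        refine le_trans ?_ hΔH
        have h51 : c₂ * d (n+1) ^ 2 ≤ a (n+1) - a (n+2) := hH1d (n+1)
        nlinarith [mul_le_mul_of_nonneg_left h51 (mul_nonneg hν0.le hpow.le)]
      have h6 : ν * c₂ * d (n+1) ^ 2 ≤ γ₁ * (c₃ * d n) * (H (n+1) - H (n+2)) := by
        nlinarith [mul_le_mul_of_nonneg_right h5 hrp.le,
          mul_le_mul_of_nonneg_left hL2 hΔHnn]
      have h7 : d (n+1) ^ 2 ≤ d n * (K * (H (n+1) - H (n+2))) := by
        have hpos : (0:ℝ) < ν * c₂ := mul_pos hν0 hc₂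
        calc d (n+1) ^ 2 ≤ γ₁ * (c₃ * d n) * (H (n+1) - H (n+2)) / (ν * c₂) := by
              rw [le_div_iff₀ hpos]; linarith
          _ = d n * (K * (H (n+1) - H (n+2))) := by rw [hKdef]; ring
      exact amgm_aux (hdnn _) (hdnn n) (mul_nonneg hK.le hΔHnn) h7
    -- choose a good starting index on the subsequence
    have ha0 : Tendsto (fun k => a (φ k)) atTop (𝓝 0) := by
      simp only [hadef]
      simpa using hgφ.sub_const (G Ustar)
    have hH0 : Tendsto (fun k => K * H (φ k)) atTop (𝓝 0) := by
      have hc : ContinuousAt (fun x : ℝ => x ^ ν) 0 :=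
        Real.continuousAt_rpow_const 0 ν (Or.inr hν0.le)
      have h1 : Tendsto (fun k => H (φ k)) atTop (𝓝 0) := by
        have := hc.tendsto.comp ha0
        simp only [hHdef]
        simpa [Real.zero_rpow hν0.ne', Function.comp_def] using this
      simpa using h1.const_mul K
    have E1 : ∀ᶠ k in atTop, ‖U (φ k) - Ustar‖ < σ / 4 := by
      have h1 := hconv (Metric.ball_mem_nhds Ustar (show (0:ℝ) < σ/4 by linarith))
      filter_upwards [h1] with k hk
      simpa [Metric.mem_ball, dist_eq_norm] using hk
    have E2 : ∀ᶠ k in atTop, a (φ k) < c₂ * (σ/8) ^ 2 := by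
      have : (0:ℝ) < c₂ * (σ/8) ^ 2 := by positivity
      exact ha0.eventually_lt_const this
    have E3 : ∀ᶠ k in atTop, K * H (φ k) < σ / 4 :=
      hH0.eventually_lt_const (by linarith)
    obtain ⟨k₀, h1, h2, h3⟩ := (E1.and (E2.and E3)).exists
    obtain ⟨h2, h3⟩ := (⟨h2, h3⟩ : _ ∧ _)
    set N := φ k₀ with hNdef
    have hN1 : ‖U N - Ustar‖ < σ / 4 := h1
    have hdN : d N < σ / 8 := by
      have hh := hH1d N
      have hgl := (hapos (N+1)).le
      have hd := hdnn N
      have h10 : c₂ * d N ^ 2 ≤ a N := by linarith [hh, hgl]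
      have hmul := h10.trans_lt h2
      have hd2 : d N ^ 2 < (σ/8) ^ 2 := (mul_lt_mul_iff_right₀ hc₂).mp hmul
      nlinarith [hd2, hd, hσ]
    -- the key induction : bounded total movement and staying inside the ball
    have main : ∀ m, (∑ i ∈ Finset.range m, d (N + i)) ≤ 2 * d N + K * H N ∧
        ∀ i ≤ m, ‖U (N + i) - Ustar‖ < σ := by
      have hBnn : 0 ≤ 2 * d N + K * H N := by
        have := hdnn N; have := (hHpos N).le; positivity
      intro m
      induction m with
      | zero =>
        constructor
        · simpa using hBnn
        · intro i hi
          interval_cases i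
          simpa using hN1.trans_le (by linarith)
      | succ m ih =>
        obtain ⟨ihT, ihball⟩ := ih
        have hterm : ∀ i ∈ Finset.range m,
            d (N + (i+1)) ≤ d (N + i) / 2 + K * (H (N+1+i) - H (N+1+(i+1))) / 2 := by
          intro i hi
          have him : i + 1 ≤ m := Finset.mem_range.mp hi
          have hb : ‖U (N + i + 1) - Ustar‖ < σ := ihball (i+1) (by omega)
          have hst := step (N + i) hb
          have e1 : N + 1 + i = N + i + 1 := by omega
          have e2 : N + 1 + (i + 1) = N + i + 2 := by omega
          rw [e1, e2]
          exact hst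
        have hs2 : ∑ i ∈ Finset.range m, (H (N+1+i) - H (N+1+(i+1)))
            = H (N+1) - H (N+1+m) := by
          simpa using Finset.sum_range_sub' (fun i => H (N+1+i)) m
        have h8 : ∑ i ∈ Finset.range m, d (N + (i+1)) ≤
            (∑ i ∈ Finset.range m, d (N + i)) / 2 + K * (H (N+1) - H (N+1+m)) / 2 := by
          calc ∑ i ∈ Finset.range m, d (N + (i+1))
              ≤ ∑ i ∈ Finset.range m, (d (N + i) / 2 + K * (H (N+1+i) - H (N+1+(i+1))) / 2) :=
                Finset.sum_le_sum hterm
            _ = (∑ i ∈ Finset.range m, d (N + i)) / 2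
                + K * (∑ i ∈ Finset.range m, (H (N+1+i) - H (N+1+(i+1)))) / 2 := by
                rw [Finset.sum_add_distrib, ← Finset.sum_div, Finset.mul_sum, ← Finset.sum_div]
            _ = (∑ i ∈ Finset.range m, d (N + i)) / 2 + K * (H (N+1) - H (N+1+m)) / 2 := by
                rw [hs2]
        have h9 : K * (H (N+1) - H (N+1+m)) ≤ K * H N := by
          have hH1N : H (N+1) ≤ H N := hHanti (Nat.le_succ N)
          have hHm : 0 ≤ H (N+1+m) := (hHpos _).le
          exact mul_le_mul_of_nonneg_left (by linarith) hK.le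
        have hsum : ∑ i ∈ Finset.range (m+1), d (N + i) ≤ 2 * d N + K * H N := by
          rw [Finset.sum_range_succ']
          simp only [Nat.add_zero]
          linarith
        refine ⟨hsum, ?_⟩
        intro i hi
        by_cases h : i ≤ m
        · exact ihball i h
        · have h : i = m + 1 := by omega
          subst h
          have tri : ‖U (N + (m+1)) - Ustar‖ ≤ ‖U N - Ustar‖
              + ∑ i ∈ Finset.range (m+1), d (N + i) := by
            have keysum0 := Finset.sum_range_sub (fun i => U (N + i)) (m+1)
            rw [Nat.add_zero] at keysum0
            have keysum : U (N + (m+1)) - U N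
                = ∑ i ∈ Finset.range (m+1), (U (N + (i+1)) - U (N + i)) := keysum0.symm
            calc ‖U (N + (m+1)) - Ustar‖
                ≤ ‖U (N + (m+1)) - U N‖ + ‖U N - Ustar‖ :=
                  norm_sub_le_norm_sub_add_norm_sub _ _ _
              _ ≤ (∑ i ∈ Finset.range (m+1), d (N + i)) + ‖U N - Ustar‖ := by
                  gcongr
                  rw [keysum]
                  refine (norm_sum_le _ _).trans (le_of_eq ?_)
                  exact Finset.sum_congr rfl fun i _ => rfl
              _ = _ := by ring
          calc ‖U (N + (m+1)) - Ustar‖ ≤ ‖U N - Ustar‖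
                + ∑ i ∈ Finset.range (m+1), d (N + i) := tri
            _ ≤ ‖U N - Ustar‖ + (2 * d N + K * H N) := by linarith
            _ < σ/4 + (2 * (σ/8) + σ/4) := by
                have := hdnn N
                have := (hHpos N).le
                linarith
            _ ≤ σ := by linarith
    -- summability and convergence
    have hsummable : Summable (fun i => d (N + i)) :=
      summable_of_sum_range_le (fun i => hdnn _) (fun m => (main m).1)
    have hsummable' : Summable d := by
      refine (summable_nat_add_iff N).mp ?_
      simpa [Nat.add_comm] using hsummable
    have hcauchy : CauchySeq U := by
      apply cauchySeq_of_summable_dist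
      have : (fun n => dist (U n) (U (n+1))) = d := by
        funext n
        rw [dist_eq_norm, norm_sub_rev]
      rw [this]
      exact hsummable'
    exact cauchySeq_tendsto_of_complete hcauchy
end

section
/- Let Φ : ℝ^M → ℝ be C¹ and satisfy the Łojasiewicz inequality at U∞ with exponent ν ∈ (0,1/2], constants γ₁ > 0, σ > 0, and let Φ* = Φ(U∞). Let A be a symmetric positive definite M×M matrix with eigenvalues in [λ₁, λ_M], λ₁ > 0, and let τ > 0, and define the modified energy Φ̃(U,V) = Φ(U) + (1/(4τ)) Vᵀ A⁻¹ V on ℝ^{2M}. Then Φ̃ satisfies a Łojasiewicz inequality at (U∞, 0): there is a constant C > 0 such that for all (U,V) with ‖U − U∞‖ < σ and Vᵀ A⁻¹ V < 1, one has |Φ̃(U,V) − Φ̃(U∞,0)|^{1−ν} ≤ C ‖∇Φ̃(U,V)‖, where ∇Φ̃(U,V) = (∇Φ(U), A⁻¹V/(2τ)). -/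
open Matrix

lemma my_add_rpow_le {p : ℝ} (hp : 0 ≤ p) (hp1 : p ≤ 1) {x y : ℝ} (hx : 0 ≤ x) (hy : 0 ≤ y) :
    (x + y) ^ p ≤ x ^ p + y ^ p := by
  lift x to NNReal using hx
  lift y to NNReal using hy
  exact_mod_cast NNReal.rpow_add_le_add_rpow x y hp hp1

theorem stmt3 {M : ℕ} (Φ : EuclideanSpace ℝ (Fin M) → ℝ) (hΦ : ContDiff ℝ 1 Φ)
    (Uinf : EuclideanSpace ℝ (Fin M)) (ν γ₁ σ τ : ℝ)
    (hν : ν ∈ Set.Ioc (0:ℝ) (1/2)) (hγ₁ : 0 < γ₁) (hσ : 0 < σ) (hτ : 0 < τ)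
    (hLoj : ∀ U : EuclideanSpace ℝ (Fin M), ‖U - Uinf‖ < σ →
      |Φ U - Φ Uinf| ^ (1 - ν) ≤ γ₁ * ‖gradient Φ U‖)
    (A : Matrix (Fin M) (Fin M) ℝ) (hA : A.PosDef) :
    ∃ C > (0:ℝ), ∀ U V : EuclideanSpace ℝ (Fin M), ‖U - Uinf‖ < σ →
      (V ⬝ᵥ A⁻¹.mulVec V) < 1 →
      |(Φ U + (1/(4*τ)) * (V ⬝ᵥ A⁻¹.mulVec V)) - Φ Uinf| ^ (1 - ν) ≤
        C * Real.sqrt (‖gradient Φ U‖^2 + ∑ i, ((1/(2*τ)) * A⁻¹.mulVec V i)^2) := by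
  obtain ⟨hν0, hν1⟩ := hν
  set p := 1 - ν with hp
  have hp0 : 0 < p := by simp only [hp]; linarith
  have hp1 : p ≤ 1 := by simp only [hp]; linarith
  have hphalf : (1:ℝ)/2 ≤ p := by simp only [hp]; linarith
  set K := (∑ i, ∑ j, |A i j|) + 1 with hK
  have hKnn : 0 ≤ ∑ i, ∑ j, |A i j| :=
    Finset.sum_nonneg fun i _ => Finset.sum_nonneg fun j _ => abs_nonneg _
  have hK0 : 0 < K := by positivity
  have h4τ : (0:ℝ) < (4*τ) ^ p := Real.rpow_pos_of_pos (by linarith) p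
  refine ⟨γ₁ + (2*τ) * Real.sqrt K / (4*τ) ^ p, by positivity, ?_⟩
  intro U V hU hq1
  set w : Fin M → ℝ := A⁻¹.mulVec V with hw
  set q := V ⬝ᵥ A⁻¹.mulVec V with hqdef
  set s := ∑ i, (w i)^2 with hs
  set g := ‖gradient Φ U‖ with hg
  have hg0 : 0 ≤ g := norm_nonneg _
  have hs0 : 0 ≤ s := Finset.sum_nonneg fun i _ => sq_nonneg _
  have hq0 : 0 ≤ q := by
    have := hA.inv.posSemidef.dotProduct_mulVec_nonneg V
    simpa [hqdef] using this
  -- V = A *ᵥ w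
  have hVw : (V : Fin M → ℝ) = A.mulVec w := by
    rw [hw, Matrix.mulVec_mulVec,
      Matrix.mul_nonsing_inv _ ((Matrix.isUnit_iff_isUnit_det _).1 hA.isUnit),
      Matrix.one_mulVec]
  have hwle : ∀ i, |w i| ≤ Real.sqrt s := by
    intro i
    rw [← Real.sqrt_sq_eq_abs]
    exact Real.sqrt_le_sqrt
      (Finset.single_le_sum (f := fun i => (w i)^2) (fun i _ => sq_nonneg _) (Finset.mem_univ i))
  have hqs : q ≤ K * s := by
    have hq' : q = ∑ i, (∑ j, A i j * w j) * w i := by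
      rw [hqdef, ← hw]
      nth_rewrite 1 [hVw]
      simp [dotProduct, Matrix.mulVec]
    rw [hq']
    calc ∑ i, (∑ j, A i j * w j) * w i
        ≤ ∑ i, ∑ j, |A i j| * s := by
          refine Finset.sum_le_sum fun i _ => ?_
          rw [Finset.sum_mul]
          refine Finset.sum_le_sum fun j _ => ?_
          calc A i j * w j * w i ≤ |A i j * w j * w i| := le_abs_self _
            _ = |A i j| * (|w j| * |w i|) := by rw [abs_mul, abs_mul, mul_assoc]
            _ ≤ |A i j| * (Real.sqrt s * Real.sqrt s) := by
                refine mul_le_mul_of_nonneg_left ?_ (abs_nonneg _)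
                exact mul_le_mul (hwle j) (hwle i) (abs_nonneg _) (Real.sqrt_nonneg _)
            _ = |A i j| * s := by rw [Real.mul_self_sqrt hs0]
      _ = (∑ i, ∑ j, |A i j|) * s := by rw [Finset.sum_mul]; simp [Finset.sum_mul]
      _ ≤ K * s := by
          apply mul_le_mul_of_nonneg_right _ hs0
          simp only [hK]; linarith
  -- the sum in the RHS
  have hsum : ∑ i, ((1/(2*τ)) * w i)^2 = (1/(2*τ))^2 * s := by
    rw [hs, Finset.mul_sum]
    exact Finset.sum_congr rfl fun i _ => by ring
  set R := Real.sqrt (g^2 + ∑ i, ((1/(2*τ)) * w i)^2) with hR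
  have hR0 : 0 ≤ R := Real.sqrt_nonneg _
  have hgR : g ≤ R := by
    rw [hR]
    refine le_trans (le_of_eq (Real.sqrt_sq hg0).symm) (Real.sqrt_le_sqrt ?_)
    have : (0:ℝ) ≤ ∑ i, ((1/(2*τ)) * w i)^2 := Finset.sum_nonneg fun i _ => sq_nonneg _
    linarith
  have hsR : Real.sqrt s ≤ 2*τ*R := by
    have h1 : Real.sqrt s = 2*τ * Real.sqrt ((1/(2*τ))^2 * s) := by
      rw [Real.sqrt_mul (sq_nonneg _), Real.sqrt_sq (by positivity)]
      field_simp
    rw [h1]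
    refine mul_le_mul_of_nonneg_left ?_ (by positivity)
    rw [hR, ← hsum]
    refine Real.sqrt_le_sqrt ?_
    have : (0:ℝ) ≤ g^2 := sq_nonneg _
    linarith
  -- main chain
  have habs : |(Φ U + (1/(4*τ)) * q) - Φ Uinf| ≤ |Φ U - Φ Uinf| + q/(4*τ) := by
    have : (Φ U + (1/(4*τ)) * q) - Φ Uinf = (Φ U - Φ Uinf) + q/(4*τ) := by ring
    rw [this]
    calc |(Φ U - Φ Uinf) + q/(4*τ)| ≤ |Φ U - Φ Uinf| + |q/(4*τ)| := abs_add_le _ _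
      _ = |Φ U - Φ Uinf| + q/(4*τ) := by
          rw [abs_of_nonneg (show (0:ℝ) ≤ q/(4*τ) by positivity)]
  have step1 : |(Φ U + (1/(4*τ)) * q) - Φ Uinf| ^ p ≤ (|Φ U - Φ Uinf| + q/(4*τ)) ^ p :=
    Real.rpow_le_rpow (abs_nonneg _) habs hp0.le
  have step2 : (|Φ U - Φ Uinf| + q/(4*τ)) ^ p ≤ |Φ U - Φ Uinf| ^ p + (q/(4*τ)) ^ p :=
    my_add_rpow_le hp0.le hp1 (abs_nonneg _) (by positivity)
  have step3 : |Φ U - Φ Uinf| ^ p ≤ γ₁ * g := hLoj U hU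
  have hqp : q ^ p ≤ Real.sqrt K * Real.sqrt s := by
    have h5 : q ^ p ≤ q ^ ((1:ℝ)/2) := by
      rcases eq_or_lt_of_le hq0 with h | h
      · rw [← h, Real.zero_rpow hp0.ne', Real.zero_rpow (by norm_num)]
      · exact Real.rpow_le_rpow_of_exponent_ge h hq1.le hphalf
    calc q ^ p ≤ q ^ ((1:ℝ)/2) := h5
      _ = Real.sqrt q := (Real.sqrt_eq_rpow q).symm
      _ ≤ Real.sqrt (K * s) := Real.sqrt_le_sqrt hqs
      _ = Real.sqrt K * Real.sqrt s := Real.sqrt_mul hK0.le _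
  have step4 : (q/(4*τ)) ^ p ≤ Real.sqrt K * Real.sqrt s / (4*τ) ^ p := by
    rw [Real.div_rpow hq0 (by positivity)]
    gcongr
  calc |(Φ U + (1/(4*τ)) * q) - Φ Uinf| ^ p
      ≤ |Φ U - Φ Uinf| ^ p + (q/(4*τ)) ^ p := step1.trans step2
    _ ≤ γ₁ * g + Real.sqrt K * Real.sqrt s / (4*τ) ^ p := add_le_add step3 step4
    _ ≤ γ₁ * R + Real.sqrt K * (2*τ*R) / (4*τ) ^ p := by
        refine add_le_add (mul_le_mul_of_nonneg_left hgR hγ₁.le) ?_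
        gcongr
    _ = (γ₁ + (2*τ) * Real.sqrt K / (4*τ) ^ p) * R := by ring
end
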